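/- Let X, Y be Hilbert spaces, A ∈ B(X,Y), T ⊆ X, S ⊆ Y closed subspaces such that G = A_{T,S}^{(2)} exists, and T' a closed subspace of X with δ̂(T,T') < 1/(1 + ‖A‖·‖G‖)². Then ‖A_{T',S}^{(2)} − A_{T,S}^{(2)}‖ ≤ ((1+√5)/2)·‖A_{T',S}^{(2)}‖·‖A_{T,S}^{(2)}‖·‖A‖·δ̂(T,T'). -/

import Mathlib

/-!
With `E = G A`, a bounded idempotent fixing `T`, and `P'` the orthogonal projection onto `T'`,
the operator `N = P' (1 - E) P'` has norm at most `(1 + ‖A‖ ‖G‖) δ(T', T) < 1`, because `1 - E`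
vanishes on `T`. So `1 - N` is invertible, and it agrees with `P' E` on `T'`; hence
`G' = (1 - N)⁻¹ P' G` is a left inverse of `A` on `T'` with range `T'`. Its kernel is `S` since
`P'` is injective on `T` when `δ(T, T') < 1`.

Two outer inverses with the same kernel satisfy `G' y = G' A G y`, so with
`z = (1 - P') G y ∈ T'ᗮ` one gets `(G' - G) y = G' A z - z`, an orthogonal difference with
`‖z‖ ≤ δ(T, T') ‖G‖ ‖y‖`. Pythagoras and `‖G'‖ ‖A‖ ≥ 1` give the factor
`√(1 + (‖G'‖ ‖A‖)²) ≤ φ ‖G'‖ ‖A‖`.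
-/

noncomputable section

open ContinuousLinearMap

/-- δ(M,N) = sup{dist(x,N) : x ∈ M, ‖x‖ = 1}, with sSup ∅ = 0 covering M = {0}. -/
def gapDelta {H : Type*} [NormedAddCommGroup H] (M N : Set H) : ℝ :=
  sSup ((fun x => Metric.infDist x N) '' {x | x ∈ M ∧ ‖x‖ = 1})

/-- The gap δ̂(M,N) = max{δ(M,N), δ(N,M)}. -/
def gapHat {H : Type*} [NormedAddCommGroup H] (M N : Set H) : ℝ :=
  max (gapDelta M N) (gapDelta N M)

/-- Orthogonal projection onto a closed subspace, as an operator H →L[ℂ] H. -/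
def projCLM {H : Type*} [NormedAddCommGroup H] [InnerProductSpace ℂ H] [CompleteSpace H]
    (K : Submodule ℂ H) (hK : IsClosed (K : Set H)) : H →L[ℂ] H :=
  haveI := hK.completeSpace_coe
  K.subtypeL.comp K.orthogonalProjectionOnto

/-- G is the outer inverse A_{T,S}^{(2)}: GAG = G, R(G) = T, N(G) = S. -/
def IsOuterInv {X Y : Type*} [NormedAddCommGroup X] [NormedSpace ℂ X]
    [NormedAddCommGroup Y] [NormedSpace ℂ Y]
    (A : X →L[ℂ] Y) (T : Submodule ℂ X) (S : Submodule ℂ Y) (G : Y →L[ℂ] X) : Prop :=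
  G ∘L (A ∘L G) = G ∧ LinearMap.range (G : Y →ₗ[ℂ] X) = T ∧ LinearMap.ker (G : Y →ₗ[ℂ] X) = S

/-- B is the Moore–Penrose inverse of A. -/
def IsMPInv {X Y : Type*} [NormedAddCommGroup X] [InnerProductSpace ℂ X] [CompleteSpace X]
    [NormedAddCommGroup Y] [InnerProductSpace ℂ Y] [CompleteSpace Y]
    (A : X →L[ℂ] Y) (B : Y →L[ℂ] X) : Prop :=
  A ∘L (B ∘L A) = A ∧ B ∘L (A ∘L B) = B ∧
  adjoint (A ∘L B) = A ∘L B ∧ adjoint (B ∘L A) = B ∘L A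

open Metric Pointwise Real

theorem gapDelta_nonneg {H : Type*} [NormedAddCommGroup H] (M N : Set H) : 0 ≤ gapDelta M N :=
  Real.sSup_nonneg (by rintro r ⟨x, _, rfl⟩; exact infDist_nonneg)

theorem gapHat_nonneg {H : Type*} [NormedAddCommGroup H] (M N : Set H) : 0 ≤ gapHat M N :=
  (gapDelta_nonneg M N).trans (le_max_left _ _)

theorem infDist_le_gapDelta_mul_norm {𝕜 H : Type*} [RCLike 𝕜] [NormedAddCommGroup H]
    [NormedSpace 𝕜 H] {M N : Submodule 𝕜 H} {x : H} (hx : x ∈ M) :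
    infDist x N ≤ gapDelta (M : Set H) N * ‖x‖ := by
  rcases eq_or_ne x 0 with rfl | hx0
  · simp [infDist_zero_of_mem N.zero_mem]
  set c : 𝕜 := (‖x‖ : 𝕜)
  have hc : c ≠ 0 := by simpa [c] using hx0
  have hunit : ‖c⁻¹ • x‖ = 1 := by simp [c, norm_smul, hx0]
  have hbdd : BddAbove ((fun x => infDist x (N : Set H)) '' {x | x ∈ M ∧ ‖x‖ = 1}) := by
    refine ⟨1, ?_⟩
    rintro r ⟨u, ⟨-, hu⟩, rfl⟩
    simpa [hu] using infDist_le_dist_of_mem (x := u) N.zero_mem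
  have hu : infDist (c⁻¹ • x) N ≤ gapDelta (M : Set H) N :=
    le_csSup hbdd ⟨c⁻¹ • x, ⟨M.smul_mem _ hx, hunit⟩, rfl⟩
  have hN : c • (N : Set H) = N := by
    ext y
    rw [Set.mem_smul_set_iff_inv_smul_mem₀ hc]
    exact N.smul_mem_iff (inv_ne_zero hc)
  calc infDist x N = infDist (c • c⁻¹ • x) (c • (N : Set H)) := by rw [smul_inv_smul₀ hc, hN]
    _ = ‖x‖ * infDist (c⁻¹ • x) N := by rw [infDist_smul₀ hc]; simp [c]
    _ ≤ ‖x‖ * gapDelta (M : Set H) N := by gcongr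
    _ = gapDelta (M : Set H) N * ‖x‖ := mul_comm _ _

theorem ContinuousLinearMap.norm_apply_le_mul_infDist {𝕜 E F : Type*} [NontriviallyNormedField 𝕜]
    [SeminormedAddCommGroup E] [NormedSpace 𝕜 E] [SeminormedAddCommGroup F] [NormedSpace 𝕜 F]
    (L : E →L[𝕜] F) {s : Set E} (hs : s.Nonempty) (hL : ∀ x ∈ s, L x = 0) (w : E) :
    ‖L w‖ ≤ ‖L‖ * infDist w s := by
  rcases (norm_nonneg L).eq_or_lt with hL0 | hLpos
  · simpa [← hL0] using L.le_opNorm w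
  rw [← div_le_iff₀' hLpos, le_infDist hs]
  intro t ht
  rw [div_le_iff₀' hLpos, dist_eq_norm]
  simpa [hL t ht] using L.le_opNorm (w - t)

theorem Submodule.norm_sub_starProjection_eq_infDist {𝕜 H : Type*} [RCLike 𝕜]
    [NormedAddCommGroup H] [InnerProductSpace 𝕜 H] (K : Submodule 𝕜 H) [K.HasOrthogonalProjection]
    (x : H) : ‖x - K.starProjection x‖ = infDist x K := by
  rw [Submodule.starProjection_minimal, infDist_eq_iInf]
  simp [dist_eq_norm]

theorem Submodule.eq_zero_of_starProjection_eq_zero {𝕜 H : Type*} [RCLike 𝕜]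
    [NormedAddCommGroup H] [InnerProductSpace 𝕜 H] {M : Submodule 𝕜 H} (K : Submodule 𝕜 H)
    [K.HasOrthogonalProjection] (hMK : gapDelta (M : Set H) K < 1) {x : H} (hx : x ∈ M)
    (hKx : K.starProjection x = 0) : x = 0 := by
  have h := (K.norm_sub_starProjection_eq_infDist x).trans_le (infDist_le_gapDelta_mul_norm hx)
  rw [hKx, sub_zero] at h
  by_contra hne
  nlinarith [norm_pos_iff.2 hne]

theorem norm_sub_le_goldenRatio_mul_of_mem_orthogonal {𝕜 H : Type*} [RCLike 𝕜]
    [NormedAddCommGroup H] [InnerProductSpace 𝕜 H] {K : Submodule 𝕜 H} {a b : H}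
    (ha : a ∈ K) (hb : b ∈ Kᗮ) {c s : ℝ} (hc : 1 ≤ c) (has : ‖a‖ ≤ c * s) (hbs : ‖b‖ ≤ s) :
    ‖a - b‖ ≤ goldenRatio * c * s := by
  have hs : 0 ≤ s := (norm_nonneg b).trans hbs
  have hpyth : ‖a - b‖ ^ 2 = ‖a‖ ^ 2 + ‖b‖ ^ 2 := by
    rw [@norm_sub_sq 𝕜, Submodule.inner_right_of_mem_orthogonal ha hb]
    simp
  -- `φ² = φ + 1` and `1 ≤ φ c²` give `c² + 1 ≤ φ² c²`
  have hφc : c ^ 2 + 1 ≤ (goldenRatio * c) ^ 2 := by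
    nlinarith [goldenRatio_sq, one_lt_goldenRatio]
  refine le_of_pow_le_pow_left₀ two_ne_zero (by positivity) ?_
  calc ‖a - b‖ ^ 2 = ‖a‖ ^ 2 + ‖b‖ ^ 2 := hpyth
    _ ≤ (c * s) ^ 2 + s ^ 2 := by gcongr
    _ = (c ^ 2 + 1) * s ^ 2 := by ring
    _ ≤ (goldenRatio * c) ^ 2 * s ^ 2 := by gcongr
    _ = (goldenRatio * c * s) ^ 2 := by ring

namespace IsOuterInv

section Normed

variable {X Y : Type*} [NormedAddCommGroup X] [NormedSpace ℂ X] [NormedAddCommGroup Y]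
  [NormedSpace ℂ Y] {A : X →L[ℂ] Y} {T T' : Submodule ℂ X} {S : Submodule ℂ Y} {G G' : Y →L[ℂ] X}

theorem apply_mem (hG : IsOuterInv A T S G) (y : Y) : G y ∈ T :=
  hG.2.1 ▸ LinearMap.mem_range_self (G : Y →ₗ[ℂ] X) y

theorem apply_apply_of_mem (hG : IsOuterInv A T S G) {x : X} (hx : x ∈ T) : G (A x) = x := by
  rw [← hG.2.1] at hx
  obtain ⟨y, rfl⟩ := hx
  exact congr($(hG.1) y)

theorem apply_eq_zero_iff (hG : IsOuterInv A T S G) {y : Y} : G y = 0 ↔ y ∈ S := by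
  rw [← hG.2.2]
  rfl

theorem of_leftInvOn (hmem : ∀ y, G y ∈ T) (hinv : ∀ x ∈ T, G (A x) = x)
    (hker : LinearMap.ker (G : Y →ₗ[ℂ] X) = S) : IsOuterInv A T S G := by
  refine ⟨ContinuousLinearMap.ext fun y => hinv _ (hmem y), le_antisymm ?_ ?_, hker⟩
  · rintro x ⟨y, rfl⟩
    exact hmem y
  · exact fun x hx => ⟨A x, hinv x hx⟩

theorem one_le_norm_mul_norm (hG : IsOuterInv A T S G) (hG0 : G ≠ 0) : 1 ≤ ‖G‖ * ‖A‖ := by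
  have hpos : 0 < ‖G‖ := norm_pos_iff.mpr hG0
  have h : ‖G‖ ≤ ‖G‖ * ‖A‖ * ‖G‖ := by
    conv_lhs => rw [← hG.1]
    calc ‖G ∘L A ∘L G‖ ≤ ‖G‖ * (‖A‖ * ‖G‖) :=
          (G.opNorm_comp_le _).trans (by gcongr; exact A.opNorm_comp_le G)
      _ = ‖G‖ * ‖A‖ * ‖G‖ := by ring
  by_contra! hlt
  nlinarith

theorem apply_apply_apply_eq (hG : IsOuterInv A T S G) (hG' : IsOuterInv A T' S G') (y : Y) :
    G' (A (G y)) = G' y := by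
  have hS : y - A (G y) ∈ S := by
    rw [← hG.apply_eq_zero_iff, map_sub, hG.apply_apply_of_mem (hG.apply_mem y), sub_self]
  rw [← sub_eq_zero, ← map_sub, hG'.apply_eq_zero_iff, ← neg_mem_iff, neg_sub]
  exact hS

end Normed

section Hilbert

variable {X Y : Type*} [NormedAddCommGroup X] [InnerProductSpace ℂ X] [NormedAddCommGroup Y]
  [NormedSpace ℂ Y] {A : X →L[ℂ] Y} {T T' : Submodule ℂ X} {S : Submodule ℂ Y} {G G' : Y →L[ℂ] X}

theorem norm_starProjection_comp_le (hG : IsOuterInv A T S G) (K : Submodule ℂ X)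
    [K.HasOrthogonalProjection] :
    ‖K.starProjection ∘L (1 - G ∘L A) ∘L K.starProjection‖ ≤
      (1 + ‖A‖ * ‖G‖) * gapDelta (K : Set X) T := by
  set P := K.starProjection
  have hP : ‖P‖ ≤ 1 := K.starProjection_norm_le
  have hδ := gapDelta_nonneg (K : Set X) T
  have hL : ‖1 - G ∘L A‖ ≤ 1 + ‖A‖ * ‖G‖ :=
    calc ‖1 - G ∘L A‖ ≤ ‖(1 : X →L[ℂ] X)‖ + ‖G ∘L A‖ := norm_sub_le _ _
      _ ≤ 1 + ‖A‖ * ‖G‖ := by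
        gcongr
        · exact ContinuousLinearMap.norm_id_le
        · exact (G.opNorm_comp_le A).trans_eq (mul_comm _ _)
  have hvanish : ∀ x ∈ (T : Set X), (1 - G ∘L A) x = 0 := fun x hx => by
    simp [hG.apply_apply_of_mem hx]
  refine ContinuousLinearMap.opNorm_le_bound _ (by positivity) fun x => ?_
  calc ‖P ((1 - G ∘L A) (P x))‖ ≤ ‖(1 - G ∘L A) (P x)‖ :=
        (P.le_of_opNorm_le hP _).trans_eq (one_mul _)
    _ ≤ ‖1 - G ∘L A‖ * infDist (P x) T :=
        (1 - G ∘L A).norm_apply_le_mul_infDist ⟨0, T.zero_mem⟩ hvanish _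
    _ ≤ (1 + ‖A‖ * ‖G‖) * (gapDelta (K : Set X) T * ‖x‖) := by
        refine mul_le_mul hL ?_ infDist_nonneg (by positivity)
        refine (infDist_le_gapDelta_mul_norm (K.starProjection_apply_mem x)).trans ?_
        gcongr
        exact (P.le_of_opNorm_le hP x).trans_eq (one_mul _)
    _ = (1 + ‖A‖ * ‖G‖) * gapDelta (K : Set X) T * ‖x‖ := by ring

theorem exists_of_gapDelta_lt [CompleteSpace X] [T'.HasOrthogonalProjection]
    (hG : IsOuterInv A T S G) (hT'T : gapDelta (T' : Set X) T * (1 + ‖A‖ * ‖G‖) < 1)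
    (hTT' : gapDelta (T : Set X) T' < 1) : ∃ G' : Y →L[ℂ] X, IsOuterInv A T' S G' := by
  set P := T'.starProjection
  set N := P ∘L (1 - G ∘L A) ∘L P
  have hN : ‖N‖ < 1 := (hG.norm_starProjection_comp_le T').trans_lt (by linarith)
  set u := Units.oneSub N hN
  have hu : ∀ x ∈ T', (u : X →L[ℂ] X) x = P (G (A x)) := by
    intro x hx
    have hPx : P x = x := T'.starProjection_eq_self_iff.2 hx
    simp [u, N, hPx]
  have hu_inv : ∀ v, (u : X →L[ℂ] X) ((↑u⁻¹ : X →L[ℂ] X) v) = v := fun v =>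
    congr($(u.mul_inv) v)
  -- `u = 1 - N`, so `u⁻¹ w = w + N (u⁻¹ w)`, and `N` takes values in `T'`
  have hu_inv_mem : ∀ w ∈ T', (↑u⁻¹ : X →L[ℂ] X) w ∈ T' := by
    intro w hw
    set v := (↑u⁻¹ : X →L[ℂ] X) w
    have hv : v - N v = w := by simpa [u] using hu_inv w
    rw [← sub_add_cancel v (N v), hv]
    exact T'.add_mem hw (T'.starProjection_apply_mem _)
  refine ⟨(↑u⁻¹ : X →L[ℂ] X) ∘L P ∘L G, of_leftInvOn
    (fun y => hu_inv_mem _ (T'.starProjection_apply_mem _)) (fun x hx => ?_) ?_⟩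
  · simp only [ContinuousLinearMap.comp_apply, ← hu x hx]
    exact congr($(u.inv_mul) x)
  · ext y
    simp only [LinearMap.mem_ker, ContinuousLinearMap.coe_coe, ContinuousLinearMap.comp_apply,
      ← hG.apply_eq_zero_iff]
    refine ⟨fun h => ?_, fun h => by simp [h]⟩
    refine Submodule.eq_zero_of_starProjection_eq_zero T' hTT' (hG.apply_mem y) ?_
    simpa [h] using (hu_inv (P (G y))).symm

theorem norm_sub_le [T'.HasOrthogonalProjection] (hG : IsOuterInv A T S G)
    (hG' : IsOuterInv A T' S G') :
    ‖G' - G‖ ≤ goldenRatio * ‖G'‖ * ‖G‖ * ‖A‖ * gapDelta (T : Set X) T' := by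
  by_cases hG'0 : G' = 0
  · have hG0 : G = 0 := ContinuousLinearMap.ext fun y =>
      hG.apply_eq_zero_iff.2 (hG'.apply_eq_zero_iff.1 (by simp [hG'0]))
    simp [hG'0, hG0]
  have hδ := gapDelta_nonneg (T : Set X) T'
  have hφ := goldenRatio_pos
  refine ContinuousLinearMap.opNorm_le_bound _ (by positivity) fun y => ?_
  set z := G y - T'.starProjection (G y)
  have hz : ‖z‖ ≤ gapDelta (T : Set X) T' * (‖G‖ * ‖y‖) :=
    calc ‖z‖ = infDist (G y) T' := T'.norm_sub_starProjection_eq_infDist (G y)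
      _ ≤ gapDelta (T : Set X) T' * ‖G y‖ := infDist_le_gapDelta_mul_norm (hG.apply_mem y)
      _ ≤ gapDelta (T : Set X) T' * (‖G‖ * ‖y‖) := by gcongr; exact G.le_opNorm y
  have hAz : ‖G' (A z)‖ ≤ ‖G'‖ * ‖A‖ * (gapDelta (T : Set X) T' * (‖G‖ * ‖y‖)) :=
    calc ‖G' (A z)‖ ≤ ‖G'‖ * ‖A‖ * ‖z‖ := (G'.comp A).le_of_opNorm_le (G'.opNorm_comp_le A) z
      _ ≤ _ := by gcongr
  have hdecomp : (G' - G) y = G' (A z) - z := by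
    rw [sub_apply, ← hG.apply_apply_apply_eq hG' y]
    have hP := hG'.apply_apply_of_mem (T'.starProjection_apply_mem (G y))
    simp only [z, map_sub, hP]
    abel
  calc ‖(G' - G) y‖ = ‖G' (A z) - z‖ := by rw [hdecomp]
    _ ≤ goldenRatio * (‖G'‖ * ‖A‖) * (gapDelta (T : Set X) T' * (‖G‖ * ‖y‖)) :=
      norm_sub_le_goldenRatio_mul_of_mem_orthogonal (hG'.apply_mem _)
        (T'.sub_starProjection_mem_orthogonal _) (hG'.one_le_norm_mul_norm hG'0) hAz hz
    _ = goldenRatio * ‖G'‖ * ‖G‖ * ‖A‖ * gapDelta (T : Set X) T' * ‖y‖ := by ring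

end Hilbert

end IsOuterInv

variable {X Y : Type*} [NormedAddCommGroup X] [InnerProductSpace ℂ X] [CompleteSpace X]
  [NormedAddCommGroup Y] [InnerProductSpace ℂ Y] [CompleteSpace Y]
theorem stmt_10_general (A : X →L[ℂ] Y) (T T' : Submodule ℂ X) (S : Submodule ℂ Y)
    (hT' : IsClosed (T' : Set X))
    (G : Y →L[ℂ] X) (hG : IsOuterInv A T S G)
    (hgap : gapHat (T : Set X) (T' : Set X) < 1 / (1 + ‖A‖ * ‖G‖) ^ 2) :
    ∃ G' : Y →L[ℂ] X, IsOuterInv A T' S G' ∧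
      ‖G' - G‖ ≤ (1 + Real.sqrt 5) / 2 * ‖G'‖ * ‖G‖ * ‖A‖ * gapHat (T : Set X) (T' : Set X) := by
  have := hT'.completeSpace_coe
  set δ := gapHat (T : Set X) T'
  have hδ0 : 0 ≤ δ := gapHat_nonneg _ _
  have h1 : 1 ≤ 1 + ‖A‖ * ‖G‖ := le_add_of_nonneg_right (by positivity)
  have hδ : δ * (1 + ‖A‖ * ‖G‖) < 1 :=
    calc δ * (1 + ‖A‖ * ‖G‖) ≤ δ * (1 + ‖A‖ * ‖G‖) ^ 2 := by gcongr; nlinarith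
      _ < 1 := by rwa [lt_div_iff₀ (by positivity)] at hgap
  obtain ⟨G', hG'⟩ := hG.exists_of_gapDelta_lt (T' := T')
    ((mul_le_mul_of_nonneg_right (le_max_right _ _) (by positivity)).trans_lt hδ)
    ((le_max_left _ _).trans_lt ((le_mul_of_one_le_right hδ0 h1).trans_lt hδ))
  refine ⟨G', hG', (hG.norm_sub_le hG').trans ?_⟩
  gcongr
  exact le_max_left _ _

theorem stmt_10 (A : X →L[ℂ] Y) (T T' : Submodule ℂ X) (S : Submodule ℂ Y)
    (hT : IsClosed (T : Set X)) (hT' : IsClosed (T' : Set X)) (hS : IsClosed (S : Set Y))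
    (G : Y →L[ℂ] X) (hG : IsOuterInv A T S G)
    (hgap : gapHat (T : Set X) (T' : Set X) < 1 / (1 + ‖A‖ * ‖G‖) ^ 2) :
    ∃ G' : Y →L[ℂ] X, IsOuterInv A T' S G' ∧
      ‖G' - G‖ ≤ (1 + Real.sqrt 5) / 2 * ‖G'‖ * ‖G‖ * ‖A‖ * gapHat (T : Set X) (T' : Set X) :=
  stmt_10_general A T T' S hT' G hG hgap
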